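/- arXiv:2005.02360 — 9 statements merged into one kernel-verified Lean document; each statement's English description precedes it below -/
import Mathlib

section
/- In a premodel category, any acyclic cofibration with fibrant target is an anodyne cofibration; that is, if j : A → Y is a cofibration with the left lifting property against all fibrations between fibrant objects, and Y is fibrant, then j has the left lifting property against all fibrations. -/
open CategoryTheory CategoryTheory.Limits

universe v u

/-- A premodel category structure on a complete and cocomplete category `C`:
two weak factorization systems (cofibrations, anodyne fibrations) and
(anodyne cofibrations, fibrations), with anodyne cofibrations ⊆ cofibrations. -/
structure Premodel (C : Type u) [Category.{v} C] [HasLimits C] [HasColimits C] where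
  Cof : MorphismProperty C
  AnCof : MorphismProperty C
  Fib : MorphismProperty C
  AnFib : MorphismProperty C
  anCof_le_cof : ∀ {X Y : C} (f : X ⟶ Y), AnCof f → Cof f
  cof_llp : ∀ {X Y A B : C} (f : X ⟶ Y) (g : A ⟶ B), Cof f → AnFib g → HasLiftingProperty f g
  cof_of_llp : ∀ {X Y : C} (f : X ⟶ Y),
    (∀ {A B : C} (g : A ⟶ B), AnFib g → HasLiftingProperty f g) → Cof f
  anFib_of_rlp : ∀ {X Y : C} (g : X ⟶ Y),
    (∀ {A B : C} (f : A ⟶ B), Cof f → HasLiftingProperty f g) → AnFib g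
  fact_cof_anFib : ∀ {X Y : C} (f : X ⟶ Y),
    ∃ (Z : C) (i : X ⟶ Z) (p : Z ⟶ Y), Cof i ∧ AnFib p ∧ i ≫ p = f
  anCof_llp : ∀ {X Y A B : C} (f : X ⟶ Y) (g : A ⟶ B), AnCof f → Fib g → HasLiftingProperty f g
  anCof_of_llp : ∀ {X Y : C} (f : X ⟶ Y),
    (∀ {A B : C} (g : A ⟶ B), Fib g → HasLiftingProperty f g) → AnCof f
  fib_of_rlp : ∀ {X Y : C} (g : X ⟶ Y),
    (∀ {A B : C} (f : A ⟶ B), AnCof f → HasLiftingProperty f g) → Fib g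
  fact_anCof_fib : ∀ {X Y : C} (f : X ⟶ Y),
    ∃ (Z : C) (i : X ⟶ Z) (p : Z ⟶ Y), AnCof i ∧ Fib p ∧ i ≫ p = f

namespace Premodel

variable {C : Type u} [Category.{v} C] [HasLimits C] [HasColimits C] (P : Premodel C)

/-- An object is fibrant if its map to the terminal object is a fibration. -/
def Fibrant (X : C) : Prop := P.Fib (terminal.from X)

/-- An object is cofibrant if the map from the initial object is a cofibration. -/
def Cofibrant (X : C) : Prop := P.Cof (initial.to X)

/-- An acyclic cofibration: a cofibration with the left lifting property against
all fibrations between fibrant objects. -/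
def AcyclicCof {X Y : C} (f : X ⟶ Y) : Prop :=
  P.Cof f ∧ ∀ {A B : C} (g : A ⟶ B), P.Fib g → P.Fibrant A → P.Fibrant B →
    HasLiftingProperty f g

/-- An acyclic fibration: a fibration with the right lifting property against
all cofibrations between cofibrant objects. -/
def AcyclicFib {X Y : C} (g : X ⟶ Y) : Prop :=
  P.Fib g ∧ ∀ {A B : C} (f : A ⟶ B), P.Cof f → P.Cofibrant A → P.Cofibrant B →
    HasLiftingProperty f g

end Premodel

variable {C : Type u} [Category.{v} C] [HasLimits C] [HasColimits C]

/-- In a premodel category, any acyclic cofibration with fibrant target is an anodyne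
cofibration: if `j` is a cofibration with the left lifting property against all fibrations
between fibrant objects and its target is fibrant, then `j` has the left lifting property
against all fibrations. -/
theorem acyclicCof_fibrant_target_anCof (P : Premodel C) {A Y : C} (j : A ⟶ Y)
    (hj : P.AcyclicCof j) (hY : P.Fibrant Y) :
    P.AnCof j := by
  obtain ⟨Z, i, p, hi, hp, hip⟩ := P.fact_anCof_fib j
  -- Z is fibrant: terminal.from Z = p ≫ terminal.from Y is a fibration
  have hZ : P.Fibrant Z := by
    have : terminal.from Z = p ≫ terminal.from Y := by
      apply Subsingleton.elim
    rw [Premodel.Fibrant, this]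
    apply P.fib_of_rlp
    intro X' Y' f hf
    haveI := P.anCof_llp f p hf hp
    haveI := P.anCof_llp f (terminal.from Y) hf hY
    infer_instance
  -- j lifts against p (fibration between fibrant objects)
  haveI hjp : HasLiftingProperty j p := hj.2 p hp hZ hY
  have sq : CommSq i j p (𝟙 Y) := ⟨by simp [hip]⟩
  obtain ⟨⟨⟨l, hl1, hl2⟩⟩⟩ := hjp.sq_hasLift sq
  -- j is a retract of i; conclude by anCof_of_llp
  apply P.anCof_of_llp
  intro X' Y' g hg
  haveI := P.anCof_llp i g hi hg
  constructor
  intro f v sqv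
  have sq2 : CommSq f i g (p ≫ v) := ⟨by rw [← Category.assoc, hip, sqv.w]⟩
  obtain ⟨⟨⟨m, hm1, hm2⟩⟩⟩ := (P.anCof_llp i g hi hg).sq_hasLift sq2
  exact ⟨⟨⟨l ≫ m, by rw [← Category.assoc, hl1, hm1],
    by rw [Category.assoc, hm2, ← Category.assoc, hl2, Category.id_comp]⟩⟩⟩
end

section
/- In a premodel category, any acyclic fibration with cofibrant domain is an anodyne fibration; that is, if p : X → Y is a fibration with the right lifting property against all cofibrations between cofibrant objects, and X is cofibrant, then p has the right lifting property against all cofibrations. -/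
open CategoryTheory CategoryTheory.Limits

universe v u

variable {C : Type u} [Category.{v} C] [HasLimits C] [HasColimits C]

/-- In a premodel category, any acyclic fibration with cofibrant domain is an anodyne
fibration: if `p` is a fibration with the right lifting property against all cofibrations
between cofibrant objects and its domain is cofibrant, then `p` has the right lifting
property against all cofibrations. -/
theorem acyclicFib_cofibrant_domain_anFib (P : Premodel C) {X Y : C} (p : X ⟶ Y)
    (hp : P.AcyclicFib p) (hX : P.Cofibrant X) :
    P.AnFib p := by
  -- Factor `p` as a cofibration `i : X ⟶ Z` followed by an anodyne fibration `q : Z ⟶ Y`.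
  obtain ⟨Z, i, q, hi, hq, hiq⟩ := P.fact_cof_anFib p
  -- `Z` is cofibrant, since `0 ⟶ Z` factors as `0 ⟶ X ⟶ Z`, a composite of cofibrations.
  have hZ : P.Cofibrant Z := by
    have e : initial.to Z = initial.to X ≫ i := by simp
    rw [Premodel.Cofibrant, e]
    refine P.cof_of_llp _ (fun g hg => ?_)
    have h1 := P.cof_llp _ g hX hg
    have h2 := P.cof_llp _ g hi hg
    infer_instance
  -- `i` is a cofibration between cofibrant objects, so it lifts against `p`.
  have hlift : HasLiftingProperty i p := hp.2 i hi hX hZ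
  have sq0 : CommSq (𝟙 X) i p q := ⟨by simpa using hiq.symm⟩
  have hl1 := sq0.fac_left
  have hl2 := sq0.fac_right
  set l := sq0.lift with hl
  -- Now show `p` has the RLP against every cofibration.
  refine P.anFib_of_rlp p (fun f hf => ?_)
  constructor
  intro u v sq
  have sq' : CommSq (u ≫ i) f q v := ⟨by
    rw [Category.assoc, hiq, sq.w]⟩
  have := P.cof_llp f q hf hq
  have hL1 := sq'.fac_left
  have hL2 := sq'.fac_right
  set L := sq'.lift with hL
  exact ⟨⟨⟨L ≫ l, by rw [← Category.assoc, hL1, Category.assoc, hl1, Category.comp_id],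
    by rw [Category.assoc, hl2, hL2]⟩⟩⟩
end

section
/- In a premodel category, if k, j, i are three composable cofibrations such that the composites k∘j and j∘i are acyclic cofibrations, then i is an acyclic cofibration. -/
open CategoryTheory CategoryTheory.Limits

universe v u

variable {C : Type u} [Category.{v} C] [HasLimits C] [HasColimits C]

/-- 2-out-of-6 type property: if `k, j, i` are composable cofibrations such that `k ∘ j`
and `j ∘ i` are acyclic cofibrations, then `i` is an acyclic cofibration. -/
theorem acyclicCof_two_out_of_six (P : Premodel C) {A B D E : C}
    (i : A ⟶ B) (j : B ⟶ D) (k : D ⟶ E)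
    (hi : P.Cof i) (hj : P.Cof j) (hk : P.Cof k)
    (hji : P.AcyclicCof (i ≫ j)) (hkj : P.AcyclicCof (j ≫ k)) :
    P.AcyclicCof i := by
  refine ⟨hi, fun {X Y} g hg hX hY => ?_⟩
  have hT : P.Fibrant (⊤_ C) := P.fib_of_rlp _ (fun f hf => by
    rw [show terminal.from (⊤_ C) = 𝟙 _ from Subsingleton.elim _ _]
    infer_instance)
  have h1 : HasLiftingProperty (j ≫ k) (terminal.from Y) := hkj.2 _ hY hY hT
  have h2 : HasLiftingProperty (i ≫ j) g := hji.2 g hg hX hY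
  constructor
  intro u v sq
  have sq1 : CommSq v (j ≫ k) (terminal.from Y) (terminal.from E) :=
    ⟨Subsingleton.elim _ _⟩
  have sq2 : CommSq u (i ≫ j) g (k ≫ sq1.lift) := ⟨by
    rw [sq.w]
    simp only [Category.assoc]
    rw [← Category.assoc j k, sq1.fac_left]⟩
  exact ⟨⟨⟨j ≫ sq2.lift, by rw [← Category.assoc]; exact sq2.fac_left, by
    rw [Category.assoc, sq2.fac_right, ← Category.assoc, sq1.fac_left]⟩⟩⟩
end

section
/- In a premodel category, acyclic cofibrations have the left cancellation property amongst cofibrations: if i and j are composable cofibrations such that j and j∘i are acyclic cofibrations, then i is an acyclic cofibration. -/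
open CategoryTheory CategoryTheory.Limits

universe v u

variable {C : Type u} [Category.{v} C] [HasLimits C] [HasColimits C]

/-- Left cancellation of acyclic cofibrations amongst cofibrations: if `i` and `j` are
composable cofibrations such that `j` and `j ∘ i` are acyclic cofibrations, then `i` is
an acyclic cofibration. -/
theorem acyclicCof_left_cancellation (P : Premodel C) {A B D : C}
    (i : A ⟶ B) (j : B ⟶ D)
    (hi : P.Cof i) (hj : P.Cof j)
    (hjAc : P.AcyclicCof j) (hjiAc : P.AcyclicCof (i ≫ j)) :
    P.AcyclicCof i := by
  obtain ⟨-, h2⟩ := hjAc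
  obtain ⟨-, h3⟩ := hjiAc
  refine ⟨hi, fun {X Y} g hg hX hY => ?_⟩
  have hterm : P.Fibrant (⊤_ C) := by
    apply P.fib_of_rlp
    intro A' B' f _
    have h : terminal.from (⊤_ C) = 𝟙 _ := Subsingleton.elim _ _
    rw [h]; infer_instance
  constructor
  intro u v sq
  -- extend v along j, using that Y is fibrant
  have inst1 : HasLiftingProperty j (terminal.from Y) := h2 _ hY hY hterm
  have sq2 : CommSq v j (terminal.from Y) (terminal.from D) :=
    ⟨Subsingleton.elim _ _⟩
  set w : D ⟶ Y := sq2.lift with hw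
  have hjw : j ≫ w = v := sq2.fac_left
  -- lift the square for i ≫ j against g
  have inst2 : HasLiftingProperty (i ≫ j) g := h3 g hg hX hY
  have sq3 : CommSq u (i ≫ j) g w := ⟨by
    rw [Category.assoc, hjw, sq.w]⟩
  exact ⟨⟨{ l := j ≫ sq3.lift,
             fac_left := by rw [← Category.assoc]; exact sq3.fac_left,
             fac_right := by rw [Category.assoc, sq3.fac_right, hjw] }⟩⟩
end

section
/- In a premodel category, for every acyclic cofibration i : A → B there exists an anodyne cofibration j : B → B' such that the composite j∘i is also an anodyne cofibration. Consequently, the class of acyclic cofibrations is contained in the closure of the anodyne cofibrations under left cancellation amongst cofibrations. -/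
open CategoryTheory CategoryTheory.Limits

universe v u

variable {C : Type u} [Category.{v} C] [HasLimits C] [HasColimits C]

/-- The closure of the anodyne cofibrations under left cancellation amongst
cofibrations. -/
inductive Premodel.LeftCancelClosure (P : Premodel C) : ∀ {X Y : C}, (X ⟶ Y) → Prop
  | anodyne {X Y : C} (f : X ⟶ Y) : P.AnCof f → Premodel.LeftCancelClosure P f
  | cancel {X Y Z : C} (i : X ⟶ Y) (j : Y ⟶ Z) : P.Cof i → P.Cof j →
      Premodel.LeftCancelClosure P j → Premodel.LeftCancelClosure P (i ≫ j) →
      Premodel.LeftCancelClosure P i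

lemma Premodel.cof_comp (P : Premodel C) {X Y Z : C} {f : X ⟶ Y} {g : Y ⟶ Z}
    (hf : P.Cof f) (hg : P.Cof g) : P.Cof (f ≫ g) := by
  apply P.cof_of_llp
  intro A B p hp
  have := P.cof_llp f p hf hp
  have := P.cof_llp g p hg hp
  infer_instance

lemma Premodel.fib_comp (P : Premodel C) {X Y Z : C} {f : X ⟶ Y} {g : Y ⟶ Z}
    (hf : P.Fib f) (hg : P.Fib g) : P.Fib (f ≫ g) := by
  apply P.fib_of_rlp
  intro A B p hp
  have := P.anCof_llp p f hp hf
  have := P.anCof_llp p g hp hg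
  infer_instance

/-- An acyclic cofibration with fibrant target is anodyne. -/
lemma Premodel.anCof_of_acyclicCof_fibrant (P : Premodel C) {X Y : C} (f : X ⟶ Y)
    (hf : P.AcyclicCof f) (hY : P.Fibrant Y) : P.AnCof f := by
  obtain ⟨Z, u, q, hu, hq, huq⟩ := P.fact_anCof_fib f
  -- Z is fibrant
  have hZ : P.Fibrant Z := by
    have : q ≫ terminal.from Y = terminal.from Z := terminal.comp_from q
    rw [Premodel.Fibrant, ← this]
    exact P.fib_comp hq hY
  -- lift in the square f ≫ 𝟙 = u ≫ q
  have hlp : HasLiftingProperty f q := hf.2 q hq hZ hY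
  have sq : CommSq u f q (𝟙 Y) := ⟨by simp [huq]⟩
  obtain ⟨⟨l⟩⟩ := hlp.sq_hasLift sq
  apply P.anCof_of_llp
  intro P' Q g hg
  have := P.anCof_llp u g hu hg
  constructor
  intro t b sq2
  have sq3 : CommSq t u g (q ≫ b) := ⟨by
    rw [← Category.assoc, huq, sq2.w]⟩
  obtain ⟨⟨m⟩⟩ := (P.anCof_llp u g hu hg).sq_hasLift sq3
  exact ⟨⟨⟨l.l ≫ m.l, by rw [← Category.assoc, l.fac_left, m.fac_left],
    by rw [Category.assoc, m.fac_right, ← Category.assoc, l.fac_right,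
      Category.id_comp]⟩⟩⟩

/-- Every acyclic cofibration `i : A ⟶ B` factors through an anodyne cofibration
`j : B ⟶ B'` with `j ∘ i` also anodyne; consequently the acyclic cofibrations are
contained in the closure of the anodyne cofibrations under left cancellation amongst
cofibrations. -/
theorem acyclicCof_fibrant_replacement (P : Premodel C) {A B : C} (i : A ⟶ B)
    (hi : P.AcyclicCof i) :
    (∃ (B' : C) (j : B ⟶ B'), P.AnCof j ∧ P.AnCof (i ≫ j)) ∧
      P.LeftCancelClosure i := by
  obtain ⟨B', j, p, hj, hp, hjp⟩ := P.fact_anCof_fib (terminal.from B)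
  have hB' : P.Fibrant B' := by
    rwa [Premodel.Fibrant, Subsingleton.elim (terminal.from B') p]
  have hij : P.AcyclicCof (i ≫ j) := by
    refine ⟨P.cof_comp hi.1 (P.anCof_le_cof j hj), ?_⟩
    intro X Y g hg hX hY
    have := hi.2 g hg hX hY
    have := P.anCof_llp j g hj hg
    infer_instance
  have hijAn : P.AnCof (i ≫ j) := P.anCof_of_acyclicCof_fibrant _ hij hB'
  refine ⟨⟨B', j, hj, hijAn⟩, ?_⟩
  exact Premodel.LeftCancelClosure.cancel i j hi.1 (P.anCof_le_cof j hj)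
    (Premodel.LeftCancelClosure.anodyne j hj)
    (Premodel.LeftCancelClosure.anodyne _ hijAn)
end

section
/- (Lifting transfer along relative cylinders.) Let C be a weak model category, let p : X → Y and q : Y → Z be composable core fibrations (fibrations with fibrant targets), and let i : A → B be a core cofibration (cofibration with cofibrant domain) admitting a relative weak cylinder object with codiagonal cofibration ∇i : B ⊔_A B → I_A B. If q∘p has the right lifting property against i and q has the right lifting property against ∇i, then p has the right lifting property against i. -/
open CategoryTheory CategoryTheory.Limits

universe v u

variable {C : Type u} [Category.{v} C] [HasLimits C] [HasColimits C]

/-- A weak model category: a premodel category in which every core cofibration admits a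
relative weak cylinder object and every core fibration admits a relative weak path
object. -/
structure WeakModel (C : Type u) [Category.{v} C] [HasLimits C] [HasColimits C]
    extends Premodel C where
  cylinderAxiom : ∀ {A B : C} (i : A ⟶ B), toPremodel.Cof i → toPremodel.Cofibrant A →
    ∃ (I D : C) (c : pushout i i ⟶ I) (d : I ⟶ D) (e : B ⟶ D),
      toPremodel.Cof c ∧
      toPremodel.AcyclicCof (pushout.inl i i ≫ c) ∧
      toPremodel.AcyclicCof e ∧
      pushout.desc (𝟙 B) (𝟙 B) rfl ≫ e = c ≫ d
  pathAxiom : ∀ {X Y : C} (p : X ⟶ Y), toPremodel.Fib p → toPremodel.Fibrant Y →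
    ∃ (Pb D : C) (c : Pb ⟶ pullback p p) (d : D ⟶ Pb) (e : D ⟶ X),
      toPremodel.Fib c ∧
      toPremodel.AcyclicFib (c ≫ pullback.fst p p) ∧
      toPremodel.AcyclicFib e ∧
      e ≫ pullback.lift (𝟙 X) (𝟙 X) rfl = d ≫ c

/-- Lifting transfer along relative cylinders: in a weak model category, given composable
core fibrations `p : X ⟶ Y`, `q : Y ⟶ Z` and a core cofibration `i : A ⟶ B` admitting a
relative weak cylinder object with codiagonal cofibration `∇i = c : B ⊔_A B ⟶ I`, if
`q ∘ p` has the right lifting property against `i` and `q` has the right lifting property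
against `∇i`, then `p` has the right lifting property against `i`. -/
theorem nabla_lift (M : WeakModel C) {X Y Z A B : C}
    (p : X ⟶ Y) (q : Y ⟶ Z) (i : A ⟶ B)
    (hp : M.Fib p) (hq : M.Fib q)
    (hY : M.toPremodel.Fibrant Y) (hZ : M.toPremodel.Fibrant Z)
    (hi : M.Cof i) (hA : M.toPremodel.Cofibrant A)
    -- a relative weak cylinder object for `i`, with `∇i = c`
    (I D : C) (c : pushout i i ⟶ I) (d : I ⟶ D) (e : B ⟶ D)
    (hc : M.Cof c)
    (hinl : M.toPremodel.AcyclicCof (pushout.inl i i ≫ c))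
    (he : M.toPremodel.AcyclicCof e)
    (hsq : pushout.desc (𝟙 B) (𝟙 B) rfl ≫ e = c ≫ d)
    (hqp : HasLiftingProperty i (p ≫ q))
    (hqnabla : HasLiftingProperty c q) :
    HasLiftingProperty i p := by
  -- basic closure facts for fibrations
  have fib_comp : ∀ {U V W : C} (f : U ⟶ V) (g : V ⟶ W),
      M.Fib f → M.Fib g → M.Fib (f ≫ g) := by
    intro U V W f g hf hg
    apply M.fib_of_rlp
    intro A' B' j hj
    have h1 := M.anCof_llp j f hj hf
    have h2 := M.anCof_llp j g hj hg
    infer_instance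
  have fibrant_term : M.toPremodel.Fibrant (⊤_ C) := by
    have : terminal.from (⊤_ C) = 𝟙 _ := Subsingleton.elim _ _
    unfold Premodel.Fibrant
    rw [this]
    apply M.fib_of_rlp
    intro A' B' j hj
    infer_instance
  have hX : M.toPremodel.Fibrant X := by
    unfold Premodel.Fibrant
    rw [show terminal.from X = p ≫ terminal.from Y from Subsingleton.elim _ _]
    exact fib_comp _ _ hp hY
  constructor
  intro a b sq
  -- Step 1: lift against p ≫ q
  have sq1 : CommSq a i (p ≫ q) (b ≫ q) :=
    ⟨by rw [← Category.assoc, sq.w, Category.assoc]⟩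
  obtain ⟨⟨l, hl1, hl2⟩⟩ := hqp.sq_hasLift sq1
  -- Step 2: extend b ≫ q along e
  have hDe := he.2 (terminal.from Z) hZ hZ fibrant_term
  have sq2 : CommSq (b ≫ q) e (terminal.from Z) (terminal.from D) :=
    ⟨Subsingleton.elim _ _⟩
  obtain ⟨⟨k, hk1, _⟩⟩ := hDe.sq_hasLift sq2
  -- Step 3: homotopy via the cylinder, lifting against q
  have hil : i ≫ (l ≫ p) = i ≫ b := by
    rw [← Category.assoc, hl1, sq.w]
  have sq3 : CommSq (pushout.desc (l ≫ p) b hil) c q (d ≫ k) := by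
    constructor
    apply pushout.hom_ext
    · simp only [pushout.inl_desc_assoc]
      rw [Category.assoc, hl2, ← Category.assoc, ← hk1]
      have : pushout.inl i i ≫ c ≫ d = e := by
        rw [← hsq, pushout.inl_desc_assoc, Category.id_comp]
      simp only [Category.assoc, reassoc_of% this]
    · simp only [pushout.inr_desc_assoc]
      rw [← hk1]
      have : pushout.inr i i ≫ c ≫ d = e := by
        rw [← hsq, pushout.inr_desc_assoc, Category.id_comp]
      simp only [Category.assoc, reassoc_of% this]
  obtain ⟨⟨H, hH1, _⟩⟩ := hqnabla.sq_hasLift sq3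
  -- Step 4: lift against p using the acyclic cofibration inl ≫ c
  have hIp := hinl.2 p hp hX hY
  have sq4 : CommSq l (pushout.inl i i ≫ c) p H := by
    constructor
    rw [Category.assoc, hH1, pushout.inl_desc]
  obtain ⟨⟨K, hK1, hK2⟩⟩ := hIp.sq_hasLift sq4
  -- Final lift
  exact ⟨⟨⟨pushout.inr i i ≫ c ≫ K, by
    rw [← Category.assoc i (pushout.inr i i), ← pushout.condition, Category.assoc,
      ← Category.assoc (pushout.inl i i) c K, hK1, hl1], by
    rw [Category.assoc, Category.assoc, hK2, hH1, pushout.inr_desc]⟩⟩⟩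
end

section
/- Let C be a premodel category in which every cofibration with cofibrant domain and fibrant codomain A → B admits a relative strong cylinder object B ⊔_A B → I_A B → B with the first inclusion B → I_A B an acyclic cofibration. Then every core cofibration i : A → B (cofibrant domain, arbitrary codomain) admits a relative weak cylinder object, obtained by composing i with a fibrant replacement B → B^fib (anodyne cofibration) and taking the relative strong cylinder of the composite. -/
/-!
Let `j : B ⟶ Z` be an anodyne cofibration into a fibrant object. A relative strong cylinder
`(c, r)` of the cofibration `i ≫ j` becomes a relative weak cylinder of `i`, with `D = Z` and
`e = j`, once `c` is precomposed with the induced map `B ⊔_A B ⟶ Z ⊔_A Z`: that map is a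
composite of two cobase changes of `j`, hence a cofibration, and its restriction to the first
copy of `B` is `j ≫ inl`, a composite of acyclic cofibrations.
-/

open CategoryTheory CategoryTheory.Limits

universe v u

variable {C : Type u} [Category.{v} C] [HasLimits C] [HasColimits C]

namespace Premodel

variable (P : Premodel C)

lemma cof_eq_llp : P.Cof = P.AnFib.llp := by
  ext X Y f
  exact ⟨fun hf _ _ g hg => P.cof_llp f g hf hg, fun hf => P.cof_of_llp f fun g hg => hf g hg⟩

instance : P.Cof.IsStableUnderComposition := by
  rw [cof_eq_llp]
  infer_instance

instance : P.Cof.IsStableUnderCobaseChange := by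
  rw [cof_eq_llp]
  infer_instance

variable {P} in
lemma AcyclicCof.comp {X Y Z : C} {f : X ⟶ Y} {g : Y ⟶ Z} (hf : P.AcyclicCof f)
    (hg : P.AcyclicCof g) : P.AcyclicCof (f ≫ g) := by
  refine ⟨P.Cof.comp_mem f g hf.1 hg.1, fun p hp hA hB => ?_⟩
  have := hf.2 p hp hA hB
  have := hg.2 p hp hA hB
  infer_instance

lemma acyclicCof_of_anCof {X Y : C} {f : X ⟶ Y} (hf : P.AnCof f) : P.AcyclicCof f :=
  ⟨P.anCof_le_cof f hf, fun g hg _ _ => P.anCof_llp f g hf hg⟩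

lemma exists_anCof_to_fibrant (X : C) : ∃ (Z : C) (j : X ⟶ Z), P.AnCof j ∧ P.Fibrant Z := by
  obtain ⟨Z, j, p, hj, hp, -⟩ := P.fact_anCof_fib (terminal.from X)
  exact ⟨Z, j, hj, by rwa [Fibrant, Subsingleton.elim (terminal.from Z) p]⟩

lemma exists_weakCylinder_of_strongCylinder_comp {A B Z I : C} {i : A ⟶ B} {j : B ⟶ Z}
    (hj : P.AcyclicCof j) (c : pushout (i ≫ j) (i ≫ j) ⟶ I) (r : I ⟶ Z) (hc : P.Cof c)
    (hc_inl : P.AcyclicCof (pushout.inl _ _ ≫ c))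
    (hcr : c ≫ r = pushout.desc (𝟙 Z) (𝟙 Z) rfl) :
    ∃ c' : pushout i i ⟶ I, P.Cof c' ∧ P.AcyclicCof (pushout.inl i i ≫ c') ∧
      pushout.desc (𝟙 B) (𝟙 B) rfl ≫ j = c' ≫ r := by
  let φ := pushout.map i i (i ≫ j) (i ≫ j) j j (𝟙 A) (by simp) (by simp)
  have hφ : P.Cof φ := MorphismProperty.pushoutMap hj.1 hj.1 rfl rfl
  have hinl : pushout.inl i i ≫ φ ≫ c = j ≫ pushout.inl _ _ ≫ c := by
    simp only [φ, pushout.map, pushout.inl_desc_assoc, Category.assoc]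
  refine ⟨φ ≫ c, P.Cof.comp_mem _ _ hφ hc, hinl ▸ hj.comp hc_inl, ?_⟩
  ext <;> simp [φ, pushout.map, hcr, pushout.inl_desc, pushout.inr_desc, pushout.inl_desc_assoc,
    pushout.inr_desc_assoc]

end Premodel

/-- If in a premodel category every cofibration with cofibrant domain and fibrant codomain
admits a relative strong cylinder object, then every core cofibration admits a relative
weak cylinder object (obtained via a fibrant replacement of its codomain). -/
theorem weak_cylinder_from_strong (P : Premodel C)
    (hstrong : ∀ {A B : C} (i : A ⟶ B), P.Cof i → P.Cofibrant A → P.Fibrant B →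
      ∃ (I : C) (c : pushout i i ⟶ I) (r : I ⟶ B),
        P.Cof c ∧ P.AcyclicCof (pushout.inl i i ≫ c) ∧
        c ≫ r = pushout.desc (𝟙 B) (𝟙 B) rfl) :
    ∀ {A B : C} (i : A ⟶ B), P.Cof i → P.Cofibrant A →
      ∃ (I D : C) (c : pushout i i ⟶ I) (d : I ⟶ D) (e : B ⟶ D),
        P.Cof c ∧
        P.AcyclicCof (pushout.inl i i ≫ c) ∧
        P.AcyclicCof e ∧
        pushout.desc (𝟙 B) (𝟙 B) rfl ≫ e = c ≫ d := by
  intro A B i hi hA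
  obtain ⟨Z, j, hj, hZ⟩ := P.exists_anCof_to_fibrant B
  have hj' := P.acyclicCof_of_anCof hj
  obtain ⟨I, c, r, hc, hc_inl, hcr⟩ := hstrong (i ≫ j) (P.Cof.comp_mem i j hi hj'.1) hA hZ
  obtain ⟨c', hc', hc'_inl, hsq⟩ :=
    P.exists_weakCylinder_of_strongCylinder_comp hj' c r hc hc_inl hcr
  exact ⟨I, Z, c', r, j, hc', hc'_inl, hj', hsq⟩
end

section
/- Conversely to the previous statement: in a premodel category, if a core cofibration i : A → B with fibrant codomain B admits a relative weak cylinder object (B ⊔_A B → I_A B → D_A B together with the acyclic cofibration B → D_A B), then i admits a relative strong cylinder object: the acyclic cofibration B → D_A B admits a retraction s : D_A B → B (since B is fibrant), and the composite B ⊔_A B → I_A B → D_A B → B is a relative strong cylinder object for i. -/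
open CategoryTheory CategoryTheory.Limits

universe v u

variable {C : Type u} [Category.{v} C] [HasLimits C] [HasColimits C]

/-- In a premodel category, a core cofibration `i : A ⟶ B` with fibrant codomain admitting
a relative weak cylinder object admits a relative strong cylinder object: the acyclic
cofibration `e : B ⟶ D` admits a retraction `s` (as `B` is fibrant) and
`B ⊔_A B ⟶ I ⟶ D ⟶ B` factors the codiagonal. -/
theorem strong_cylinder_from_weak (P : Premodel C) {A B : C} (i : A ⟶ B)
    (hi : P.Cof i) (hA : P.Cofibrant A) (hB : P.Fibrant B)
    (I D : C) (c : pushout i i ⟶ I) (d : I ⟶ D) (e : B ⟶ D)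
    (hc : P.Cof c)
    (hinl : P.AcyclicCof (pushout.inl i i ≫ c))
    (he : P.AcyclicCof e)
    (hsq : pushout.desc (𝟙 B) (𝟙 B) rfl ≫ e = c ≫ d) :
    ∃ s : D ⟶ B, e ≫ s = 𝟙 B ∧
      c ≫ (d ≫ s) = pushout.desc (𝟙 B) (𝟙 B) rfl := by
  have hT : P.Fibrant (⊤_ C) := by
    apply P.fib_of_rlp
    intro X Y f _
    constructor
    intro u v sq
    exact ⟨⟨⟨terminal.from Y, Subsingleton.elim _ _, Subsingleton.elim _ _⟩⟩⟩
  have hlift : HasLiftingProperty e (terminal.from B) := he.2 _ hB hB hT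
  have sq : 𝟙 B ≫ terminal.from B = e ≫ terminal.from D := Subsingleton.elim _ _
  obtain ⟨l, hl1, _⟩ := (hlift.sq_hasLift (CommSq.mk sq)).exists_lift
  refine ⟨l, hl1, ?_⟩
  rw [← Category.assoc, ← hsq, Category.assoc, hl1, Category.comp_id]
end

section
/- Let C be a weak model category and S a class of core cofibrations closed under a choice of relative cylinder codiagonals ∇ (i.e., for each j in S some ∇j : B ⊔_A B → I_A B lies in the class generated by S and the anodyne cofibrations). Suppose a new premodel structure on C has the same fibrations and anodyne fibrations as a structure whose anodyne cofibrations are generated by the anodyne cofibrations of C together with S. Then a map between fibrant objects of the new structure is a fibration of the new structure if and only if it is a fibration of C. -/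
open CategoryTheory CategoryTheory.Limits

universe v u

variable {C : Type u} [Category.{v} C] [HasLimits C] [HasColimits C]

/-- Fibrations of the new premodel structure: maps with the right lifting property
against the generating anodyne cofibrations of the new structure, namely the anodyne
cofibrations of `C` together with the maps of `S`. -/
def NewFib (M : WeakModel C) (S : MorphismProperty C) {X Y : C} (g : X ⟶ Y) : Prop :=
  ∀ {A B : C} (f : A ⟶ B), (M.AnCof f ∨ S f) → HasLiftingProperty f g

theorem NewFib.fib {M : WeakModel C} {S : MorphismProperty C} {X Y : C} {g : X ⟶ Y}
    (hg : NewFib M S g) : M.Fib g :=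
  M.fib_of_rlp g fun f hf => hg f (Or.inl hf)

/- Lift `j` against `X ⟶ ⊤` to get `ℓ : B ⟶ X` under `u`. The maps `ℓ ≫ p` and `v` glue to
`B ⊔_A B ⟶ Y`, which extends along `c` to `H : I ⟶ Y`; lifting `inl ≫ c` against `p` in the
square `ℓ, H` gives `K : I ⟶ X`, and `inr ≫ c ≫ K` solves the original square. -/
theorem hasLiftingProperty_of_relativeCylinder {D : Type*} [Category D] [HasTerminal D]
    {A B I X Y : D} (j : A ⟶ B) [HasPushout j j] (c : pushout j j ⟶ I) (p : X ⟶ Y)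
    [HasLiftingProperty j (terminal.from X)] [HasLiftingProperty c (terminal.from Y)]
    [HasLiftingProperty (pushout.inl j j ≫ c) p] :
    HasLiftingProperty j p where
  sq_hasLift {u v} sq := by
    have sqX : CommSq u j (terminal.from X) (terminal.from B) := ⟨terminal.hom_ext _ _⟩
    set ℓ := sqX.lift
    have glue : j ≫ ℓ ≫ p = j ≫ v := by rw [sqX.fac_left_assoc, sq.w]
    have sqY : CommSq (pushout.desc (ℓ ≫ p) v glue) c (terminal.from Y) (terminal.from I) :=
      ⟨terminal.hom_ext _ _⟩
    set H := sqY.lift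
    have sqI : CommSq ℓ (pushout.inl j j ≫ c) p H :=
      ⟨by rw [Category.assoc, sqY.fac_left, pushout.inl_desc]⟩
    set K := sqI.lift
    have hK : pushout.inl j j ≫ c ≫ K = ℓ := by rw [← Category.assoc, sqI.fac_left]
    exact ⟨⟨⟨pushout.inr j j ≫ c ≫ K,
      by rw [← pushout.condition_assoc, hK, sqX.fac_left],
      by rw [Category.assoc, Category.assoc, sqI.fac_right, sqY.fac_left, pushout.inr_desc]⟩⟩⟩

theorem new_fibration_between_new_fibrants_general (M : WeakModel C) (S : MorphismProperty C)
    (hnabla : ∀ {A B : C} (j : A ⟶ B), S j →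
      ∃ (I D : C) (c : pushout j j ⟶ I) (d : I ⟶ D) (e : B ⟶ D),
        M.Cof c ∧
        M.toPremodel.AcyclicCof (pushout.inl j j ≫ c) ∧
        M.toPremodel.AcyclicCof e ∧
        pushout.desc (𝟙 B) (𝟙 B) rfl ≫ e = c ≫ d ∧
        -- the chosen `∇j = c` lies in the class generated by `S` and the anodyne
        -- cofibrations: it lifts against every map with the right lifting property
        -- against the generators
        (∀ {X Y : C} (g : X ⟶ Y), NewFib M S g → HasLiftingProperty c g)) :
    ∀ {X Y : C} (g : X ⟶ Y), NewFib M S (terminal.from X) → NewFib M S (terminal.from Y) →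
      (NewFib M S g ↔ M.Fib g) := by
  intro X Y g hX hY
  refine ⟨NewFib.fib, fun hg A B j hj => hj.elim (M.anCof_llp j g · hg) fun hjS => ?_⟩
  obtain ⟨I, D, c, _, _, -, hinl, -, -, hc⟩ := hnabla j hjS
  have := hX j (Or.inr hjS)
  have := hc _ hY
  have := hinl.2 g hg hX.fib hY.fib
  exact hasLiftingProperty_of_relativeCylinder j c g

/-- Let `C` be a weak model category and `S` a class of core cofibrations closed under a
choice of relative cylinder codiagonals `∇` lying in the class generated by `S` and the
anodyne cofibrations. Then a map between fibrant objects of the new structure (whose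
anodyne cofibrations are generated by the anodyne cofibrations of `C` together with `S`)
is a fibration of the new structure if and only if it is a fibration of `C`. -/
theorem new_fibration_between_new_fibrants (M : WeakModel C) (S : MorphismProperty C)
    (hScore : ∀ {A B : C} (j : A ⟶ B), S j → M.Cof j ∧ M.toPremodel.Cofibrant A)
    (hnabla : ∀ {A B : C} (j : A ⟶ B), S j →
      ∃ (I D : C) (c : pushout j j ⟶ I) (d : I ⟶ D) (e : B ⟶ D),
        M.Cof c ∧
        M.toPremodel.AcyclicCof (pushout.inl j j ≫ c) ∧
        M.toPremodel.AcyclicCof e ∧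
        pushout.desc (𝟙 B) (𝟙 B) rfl ≫ e = c ≫ d ∧
        -- the chosen `∇j = c` lies in the class generated by `S` and the anodyne
        -- cofibrations: it lifts against every map with the right lifting property
        -- against the generators
        (∀ {X Y : C} (g : X ⟶ Y), NewFib M S g → HasLiftingProperty c g)) :
    ∀ {X Y : C} (g : X ⟶ Y), NewFib M S (terminal.from X) → NewFib M S (terminal.from Y) →
      (NewFib M S g ↔ M.Fib g) :=
  new_fibration_between_new_fibrants_general M S hnabla
end
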